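/- Let ℓ(s) = 1 + |log s| and ℓℓ(s) = 1 + log ℓ(s). For q ∈ [1,∞], β > 1/q', one has ‖s^{-1/q'} ℓ(s)^{-1/q'} ℓℓ(s)^{-β}‖_{L^{q'}(0,r)} ≈ ℓℓ(r)^{1/q' - β} near 0, with constants independent of r. -/

import Mathlib

/-!
On `(0, 1)` we have `ℓ(s) = 1 - log s` and `ℓℓ' = -1 / (s ℓ)`. For `q' < ∞` the `q'`-th
power of the weight is `s⁻¹ ℓ(s)⁻¹ ℓℓ(s)^(-βq')`, the derivative of `ℓℓ^(1 - βq') / (βq' - 1)`,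
which tends to `0` at `0⁺` because `βq' > 1`; so the norm is exactly
`(βq' - 1)^(-1/q') ℓℓ(r)^(1/q' - β)`. For `q' = ∞` the weight is `ℓℓ^(-β)`, increasing and
continuous on `(0, 1)`, so its essential supremum over `(0, r)` is `ℓℓ(r)^(-β)`.
-/

open MeasureTheory Set
open scoped ENNReal

noncomputable def ell (s : ℝ) : ℝ := 1 + |Real.log s|
noncomputable def ellell (s : ℝ) : ℝ := 1 + Real.log (ell s)

open Filter Topology Function

theorem lintegral_Ioo_ofReal_eq_sub_of_hasDerivAt_of_tendsto {f f' : ℝ → ℝ} {a b fa fb : ℝ}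
    (hab : a < b) (hderiv : ∀ x ∈ Ioo a b, HasDerivAt f (f' x) x)
    (hpos : ∀ x ∈ Ioo a b, 0 ≤ f' x) (ha : Tendsto f (𝓝[>] a) (𝓝 fa))
    (hb : Tendsto f (𝓝[<] b) (𝓝 fb)) :
    ∫⁻ x in Ioo a b, ENNReal.ofReal (f' x) = ENNReal.ofReal (fb - fa) := by
  -- patching in the endpoint limits makes `F` continuous on `[a, b]`, as the integrability
  -- criterion for nonnegative derivatives requires
  set F : ℝ → ℝ := update (update f a fa) b fb
  have hFderiv : ∀ x ∈ Ioo a b, HasDerivAt F (f' x) x := by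
    refine fun x hx => (hderiv x hx).congr_of_eventuallyEq ?_
    filter_upwards [Ioo_mem_nhds hx.1 hx.2] with y hy
    simp only [F, update_of_ne hy.2.ne, update_of_ne hy.1.ne']
  have hFcont : ContinuousOn F (Icc a b) := by
    rw [continuousOn_update_iff, continuousOn_update_iff, Icc_sdiff_right, Ico_sdiff_left]
    refine ⟨⟨fun x hx => (hderiv x hx).continuousAt.continuousWithinAt,
      fun _ => ha.mono_left (nhdsWithin_mono _ Ioo_subset_Ioi_self)⟩, fun _ => ?_⟩
    refine (hb.congr' ?_).mono_left (nhdsWithin_mono _ Ico_subset_Iio_self)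
    filter_upwards [Ioo_mem_nhdsLT hab] with x hx using (update_of_ne hx.1.ne' _ _).symm
  have hint : IntegrableOn f' (Ioo a b) :=
    (intervalIntegral.integrableOn_deriv_of_nonneg hFcont hFderiv hpos).mono_set
      Ioo_subset_Ioc_self
  rw [← ofReal_integral_eq_lintegral_ofReal hint
      (ae_restrict_of_forall_mem measurableSet_Ioo hpos),
    ← integral_Ioc_eq_integral_Ioo, ← intervalIntegral.integral_of_le hab.le,
    intervalIntegral.integral_eq_sub_of_hasDerivAt_of_tendsto hab hderiv
      ((intervalIntegrable_iff_integrableOn_Ioo_of_le hab.le).2 hint) ha hb]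

theorem eLpNorm_top_restrict_Ioo_of_monotoneOn {g : ℝ → ℝ} {a b : ℝ} (hab : a < b)
    (hg0 : ∀ x ∈ Ioc a b, 0 ≤ g x) (hg : MonotoneOn g (Ioc a b))
    (hgb : Tendsto g (𝓝[<] b) (𝓝 (g b))) :
    eLpNorm g ∞ (volume.restrict (Ioo a b)) = ENNReal.ofReal (g b) := by
  refine le_antisymm ?_ ?_
  · rw [eLpNorm_exponent_top]
    refine eLpNormEssSup_le_of_ae_bound (ae_restrict_of_forall_mem measurableSet_Ioo fun x hx => ?_)
    rw [Real.norm_of_nonneg (hg0 x (Ioo_subset_Ioc_self hx))]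
    exact hg (Ioo_subset_Ioc_self hx) (right_mem_Ioc.2 hab) hx.2.le
  have hlow : ∀ x ∈ Ioo a b, ENNReal.ofReal (g x) ≤ eLpNorm g ∞ (volume.restrict (Ioo a b)) := by
    intro x hx
    have hgx : 0 ≤ g x := hg0 x (Ioo_subset_Ioc_self hx)
    have hne : volume.restrict (Ioo x b) ≠ 0 := by simp [hx.2]
    calc ENNReal.ofReal (g x) = eLpNorm (fun _ : ℝ => g x) ∞ (volume.restrict (Ioo x b)) := by
          rw [eLpNorm_exponent_top, eLpNormEssSup_const _ hne, Real.enorm_of_nonneg hgx]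
      _ ≤ eLpNorm g ∞ (volume.restrict (Ioo x b)) := by
          refine eLpNorm_mono_ae_real (ae_restrict_of_forall_mem measurableSet_Ioo fun y hy => ?_)
          rw [Real.norm_of_nonneg hgx]
          exact hg (Ioo_subset_Ioc_self hx) ⟨hx.1.trans hy.1, hy.2.le⟩ hy.1.le
      _ ≤ eLpNorm g ∞ (volume.restrict (Ioo a b)) :=
          eLpNorm_mono_measure _ (Measure.restrict_mono (Ioo_subset_Ioo_left hx.1.le) le_rfl)
  exact le_of_tendsto ((ENNReal.continuous_ofReal.tendsto _).comp hgb)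
    (eventually_of_mem (Ioo_mem_nhdsLT hab) hlow)

theorem one_le_ell (s : ℝ) : 1 ≤ ell s := le_add_of_nonneg_right (abs_nonneg _)

theorem one_le_ellell (s : ℝ) : 1 ≤ ellell s :=
  le_add_of_nonneg_right (Real.log_nonneg (one_le_ell s))

theorem ell_eq_one_sub_log {s : ℝ} (hs0 : 0 ≤ s) (hs1 : s ≤ 1) : ell s = 1 - Real.log s := by
  rw [ell, abs_of_nonpos (Real.log_nonpos hs0 hs1), sub_eq_add_neg]

theorem ellell_antitoneOn : AntitoneOn ellell (Ioc 0 1) := by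
  intro a ha b hb hab
  have hell : ell b ≤ ell a := by
    rw [ell_eq_one_sub_log ha.1.le ha.2, ell_eq_one_sub_log hb.1.le hb.2]
    exact sub_le_sub_left (Real.log_le_log ha.1 hab) 1
  exact add_le_add_right (Real.log_le_log (zero_lt_one.trans_le (one_le_ell b)) hell) 1

theorem hasDerivAt_ell {s : ℝ} (hs0 : 0 < s) (hs1 : s < 1) : HasDerivAt ell (-s⁻¹) s := by
  have h : HasDerivAt (fun x => 1 - Real.log x) (-s⁻¹) s := by
    simpa using (Real.hasDerivAt_log hs0.ne').const_sub 1
  refine h.congr_of_eventuallyEq ?_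
  filter_upwards [Ioo_mem_nhds hs0 hs1] with x hx
  exact ell_eq_one_sub_log hx.1.le hx.2.le

theorem hasDerivAt_ellell {s : ℝ} (hs0 : 0 < s) (hs1 : s < 1) :
    HasDerivAt ellell (-s⁻¹ / ell s) s :=
  ((hasDerivAt_ell hs0 hs1).log (zero_lt_one.trans_le (one_le_ell s)).ne').const_add 1

theorem tendsto_ellell_nhdsGT_zero : Tendsto ellell (𝓝[>] 0) atTop := by
  have hell : Tendsto ell (𝓝[>] 0) atTop :=
    tendsto_atTop_add_const_left _ 1 (tendsto_abs_atBot_atTop.comp Real.tendsto_log_nhdsGT_zero)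
  exact tendsto_atTop_add_const_left _ 1 (Real.tendsto_log_atTop.comp hell)

theorem hasDerivAt_ellell_rpow_div {γ s : ℝ} (hγ : γ ≠ 1) (hs0 : 0 < s) (hs1 : s < 1) :
    HasDerivAt (fun x => ellell x ^ (1 - γ) / (γ - 1))
      (s⁻¹ * (ell s)⁻¹ * ellell s ^ (-γ)) s := by
  have h := ((hasDerivAt_ellell hs0 hs1).rpow_const
    (Or.inl (zero_lt_one.trans_le (one_le_ellell s)).ne') (p := 1 - γ)).div_const (γ - 1)
  refine h.congr_deriv ?_
  rw [sub_sub_cancel_left]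
  field_simp [sub_ne_zero.2 hγ]
  ring

theorem lintegral_Ioo_zero_inv_mul_ell_mul_ellell_rpow {γ r : ℝ} (hγ : 1 < γ) (hr0 : 0 < r)
    (hr1 : r < 1) :
    ∫⁻ s in Ioo 0 r, ENNReal.ofReal (s⁻¹ * (ell s)⁻¹ * ellell s ^ (-γ)) =
      ENNReal.ofReal (ellell r ^ (1 - γ) / (γ - 1)) := by
  have hderiv : ∀ s ∈ Ioo 0 r, HasDerivAt (fun x => ellell x ^ (1 - γ) / (γ - 1))
      (s⁻¹ * (ell s)⁻¹ * ellell s ^ (-γ)) s :=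
    fun s hs => hasDerivAt_ellell_rpow_div hγ.ne' hs.1 (hs.2.trans hr1)
  have hpos : ∀ s ∈ Ioo 0 r, 0 ≤ s⁻¹ * (ell s)⁻¹ * ellell s ^ (-γ) := fun s hs =>
    mul_nonneg
      (mul_nonneg (inv_nonneg.2 hs.1.le) (inv_nonneg.2 (zero_le_one.trans (one_le_ell s))))
      (Real.rpow_nonneg (zero_le_one.trans (one_le_ellell s)) _)
  have hzero : Tendsto (fun x => ellell x ^ (1 - γ) / (γ - 1)) (𝓝[>] 0) (𝓝 0) := by
    have h := ((tendsto_rpow_neg_atTop (sub_pos.2 hγ)).comp tendsto_ellell_nhdsGT_zero).div_const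
      (γ - 1)
    rwa [zero_div, neg_sub] at h
  simpa using lintegral_Ioo_ofReal_eq_sub_of_hasDerivAt_of_tendsto hr0 hderiv hpos hzero
    (hasDerivAt_ellell_rpow_div hγ.ne' hr0 hr1).continuousAt.continuousWithinAt

noncomputable def logWeight (p β s : ℝ) : ℝ := s ^ (-p) * ell s ^ (-p) * ellell s ^ (-β)

theorem logWeight_nonneg (p β : ℝ) {s : ℝ} (hs : 0 ≤ s) : 0 ≤ logWeight p β s :=
  mul_nonneg (mul_nonneg (Real.rpow_nonneg hs _)
    (Real.rpow_nonneg (zero_le_one.trans (one_le_ell s)) _))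
    (Real.rpow_nonneg (zero_le_one.trans (one_le_ellell s)) _)

theorem logWeight_rpow {t β s : ℝ} (ht : 0 < t) (hs : 0 < s) :
    logWeight t⁻¹ β s ^ t = s⁻¹ * (ell s)⁻¹ * ellell s ^ (-(β * t)) := by
  have hell : 0 ≤ ell s := zero_le_one.trans (one_le_ell s)
  have hellell : 0 ≤ ellell s := zero_le_one.trans (one_le_ellell s)
  rw [logWeight, Real.mul_rpow (by positivity) (by positivity),
    Real.mul_rpow (by positivity) (by positivity), ← Real.rpow_mul hs.le, ← Real.rpow_mul hell,
    ← Real.rpow_mul hellell, neg_mul, inv_mul_cancel₀ ht.ne', neg_mul, Real.rpow_neg_one,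
    Real.rpow_neg_one]

theorem eLpNorm_logWeight_restrict_Ioo {p : ℝ≥0∞} (hp0 : p ≠ 0) (hp : p ≠ ∞) {β r : ℝ}
    (hβ : p.toReal⁻¹ < β) (hr0 : 0 < r) (hr1 : r < 1) :
    eLpNorm (logWeight p.toReal⁻¹ β) p (volume.restrict (Ioo 0 r)) =
      ENNReal.ofReal ((β * p.toReal - 1)⁻¹ ^ p.toReal⁻¹ * ellell r ^ (p.toReal⁻¹ - β)) := by
  set t := p.toReal
  have ht : 0 < t := ENNReal.toReal_pos hp0 hp
  have hγ : 1 < β * t := (inv_lt_iff_one_lt_mul₀ ht).1 hβ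
  have hellell : 0 ≤ ellell r := zero_le_one.trans (one_le_ellell r)
  have hpow : EqOn (fun s => ‖logWeight t⁻¹ β s‖ₑ ^ t)
      (fun s => ENNReal.ofReal (s⁻¹ * (ell s)⁻¹ * ellell s ^ (-(β * t)))) (Ioo 0 r) := by
    intro s hs
    dsimp only
    rw [Real.enorm_of_nonneg (logWeight_nonneg _ _ hs.1.le),
      ENNReal.ofReal_rpow_of_nonneg (logWeight_nonneg _ _ hs.1.le) ht.le, logWeight_rpow ht hs.1]
  have hroot : (ellell r ^ (1 - β * t) / (β * t - 1)) ^ t⁻¹ =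
      (β * t - 1)⁻¹ ^ t⁻¹ * ellell r ^ (t⁻¹ - β) := by
    rw [div_eq_inv_mul, Real.mul_rpow (inv_nonneg.2 (sub_pos.2 hγ).le) (Real.rpow_nonneg hellell _),
      ← Real.rpow_mul hellell, sub_mul, one_mul, mul_assoc, mul_inv_cancel₀ ht.ne', mul_one]
  rw [eLpNorm_eq_lintegral_rpow_enorm_toReal hp0 hp,
    setLIntegral_congr_fun measurableSet_Ioo hpow,
    lintegral_Ioo_zero_inv_mul_ell_mul_ellell_rpow hγ hr0 hr1, one_div,
    ENNReal.ofReal_rpow_of_nonneg (div_nonneg (Real.rpow_nonneg hellell _) (sub_pos.2 hγ).le)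
      (inv_nonneg.2 ht.le), hroot]

theorem eLpNorm_top_logWeight_zero_restrict_Ioo {β r : ℝ} (hβ : 0 ≤ β) (hr0 : 0 < r)
    (hr1 : r < 1) :
    eLpNorm (logWeight 0 β) ∞ (volume.restrict (Ioo 0 r)) =
      ENNReal.ofReal (ellell r ^ (-β)) := by
  have hweight : logWeight 0 β = fun s => ellell s ^ (-β) := by
    ext s; simp [logWeight]
  rw [hweight]
  refine eLpNorm_top_restrict_Ioo_of_monotoneOn hr0
    (fun s _ => Real.rpow_nonneg (zero_le_one.trans (one_le_ellell s)) _) ?_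
    ((hasDerivAt_ellell hr0 hr1).continuousAt.continuousWithinAt.rpow_const
      (Or.inl (zero_lt_one.trans_le (one_le_ellell r)).ne'))
  intro a ha b hb hab
  exact Real.rpow_le_rpow_of_nonpos (zero_lt_one.trans_le (one_le_ellell b))
    (ellell_antitoneOn ⟨ha.1, ha.2.trans hr1.le⟩ ⟨hb.1, hb.2.trans hr1.le⟩ hab) (neg_nonpos.2 hβ)

theorem exists_pos_eLpNorm_logWeight_eq {p : ℝ≥0∞} (hp0 : p ≠ 0) {β : ℝ}
    (hβ : (1 / p).toReal < β) :
    ∃ C : ℝ, 0 < C ∧ ∀ r ∈ Ioo (0 : ℝ) 1,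
      eLpNorm (logWeight (1 / p).toReal β) p (volume.restrict (Ioo 0 r)) =
        ENNReal.ofReal (C * ellell r ^ ((1 / p).toReal - β)) := by
  rcases eq_or_ne p ∞ with rfl | hp
  · simp only [one_div, ENNReal.inv_top, ENNReal.toReal_zero, zero_sub] at hβ ⊢
    exact ⟨1, one_pos, fun r hr => by
      rw [one_mul, eLpNorm_top_logWeight_zero_restrict_Ioo hβ.le hr.1 hr.2]⟩
  · rw [one_div, ENNReal.toReal_inv] at hβ ⊢
    have hγ : 0 < β * p.toReal - 1 :=
      sub_pos.2 ((inv_lt_iff_one_lt_mul₀ (ENNReal.toReal_pos hp0 hp)).1 hβ)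
    exact ⟨_, Real.rpow_pos_of_pos (inv_pos.2 hγ) _,
      fun r hr => eLpNorm_logWeight_restrict_Ioo hp0 hp hβ hr.1 hr.2⟩

theorem stmt9_general (q q' : ℝ≥0∞) (hconj : 1 / q + 1 / q' = 1)
    (β : ℝ) (hβ : (1 / q').toReal < β) :
    ∃ c C r₀ : ℝ, 0 < c ∧ 0 < C ∧ 0 < r₀ ∧
      ∀ r ∈ Set.Ioo (0 : ℝ) r₀,
        ENNReal.ofReal (c * ellell r ^ ((1 / q').toReal - β)) ≤
            eLpNorm (fun s : ℝ =>
                s ^ (-(1 / q').toReal) * ell s ^ (-(1 / q').toReal) * ellell s ^ (-β))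
              q' (volume.restrict (Set.Ioo (0 : ℝ) r)) ∧
          eLpNorm (fun s : ℝ =>
                s ^ (-(1 / q').toReal) * ell s ^ (-(1 / q').toReal) * ellell s ^ (-β))
              q' (volume.restrict (Set.Ioo (0 : ℝ) r)) ≤
            ENNReal.ofReal (C * ellell r ^ ((1 / q').toReal - β)) := by
  have hq' : q' ≠ 0 := by
    rintro rfl
    simp at hconj
  obtain ⟨C, hC, hnorm⟩ := exists_pos_eLpNorm_logWeight_eq hq' hβ
  exact ⟨C, C, 1, hC, hC, one_pos, fun r hr => ⟨(hnorm r hr).ge, (hnorm r hr).le⟩⟩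

/-- For `β > 1/q'`: `‖s^{-1/q'} ℓ(s)^{-1/q'} ℓℓ(s)^{-β}‖_{L^{q'}(0,r)} ≈ ℓℓ(r)^{1/q'-β}`
near `0`, with constants independent of `r`. -/
theorem stmt9 (q q' : ℝ≥0∞) (hq : 1 ≤ q) (hconj : 1 / q + 1 / q' = 1)
    (β : ℝ) (hβ : (1 / q').toReal < β) :
    ∃ c C r₀ : ℝ, 0 < c ∧ 0 < C ∧ 0 < r₀ ∧
      ∀ r ∈ Set.Ioo (0 : ℝ) r₀,
        ENNReal.ofReal (c * ellell r ^ ((1 / q').toReal - β)) ≤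
            eLpNorm (fun s : ℝ =>
                s ^ (-(1 / q').toReal) * ell s ^ (-(1 / q').toReal) * ellell s ^ (-β))
              q' (volume.restrict (Set.Ioo (0 : ℝ) r)) ∧
          eLpNorm (fun s : ℝ =>
                s ^ (-(1 / q').toReal) * ell s ^ (-(1 / q').toReal) * ellell s ^ (-β))
              q' (volume.restrict (Set.Ioo (0 : ℝ) r)) ≤
            ENNReal.ofReal (C * ellell r ^ ((1 / q').toReal - β)) :=
  stmt9_general q q' hconj β hβ
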